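/- Intuitionistic propositional logic is not base-complete over non-monotonic standard base semantics: there exist Γ, A, and a base 𝔅 (namely Γ = {p}, A = q, 𝔅 = ∅) such that Γ ⊨_𝔅 A but Γ is not derivable from A in IL augmented with 𝔅. -/
import Mathlib


/-- Atomic rules of arbitrary level: a rule has a list of premises,
each premise consisting of a list of dischargeable lower-level rules
and an atomic conclusion, together with an atomic conclusion. -/
inductive Rule where
  | mk : List (List Rule × Nat) → Nat → Rule

/-- A level-0 rule (atomic axiom). -/
def Rule.ax (a : Nat) : Rule := Rule.mk [] a

/-- Atomic derivability over an atomic base (a set of atomic rules). -/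
inductive Derives : Set Rule → Nat → Prop where
  | intro {B : Set Rule} {prems : List (List Rule × Nat)} {a : Nat}
      (hmem : Rule.mk prems a ∈ B)
      (hprem : ∀ p ∈ prems, Derives (B ∪ {r | r ∈ p.1}) p.2) :
      Derives B a

/-- Propositional formulas: atoms, ⊥, ∧, ∨, →. -/
inductive Form where
  | atom : Nat → Form
  | bot : Form
  | and : Form → Form → Form
  | or : Form → Form → Form
  | imp : Form → Form → Form

/-- Substitution of formulas for atoms. -/
def Form.subst (σ : Nat → Form) : Form → Form
  | .atom a => σ a
  | .bot => .bot
  | .and A B => .and (A.subst σ) (B.subst σ)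
  | .or A B => .or (A.subst σ) (B.subst σ)
  | .imp A B => .imp (A.subst σ) (B.subst σ)

/-- Categorical validity on a base, standard (non-monotonic) base semantics.
The atomic constant ⊥ is never valid (bases are assumed consistent). -/
def Valid (B : Set Rule) : Form → Prop
  | .atom a => Derives B a
  | .bot => False
  | .and A C => Valid B A ∧ Valid B C
  | .or A C => Valid B A ∨ Valid B C
  | .imp A C => Valid B A → Valid B C

/-- Hypothetical consequence on a base `B`: `Γ ⊨_B A`. -/
def Cons (B : Set Rule) (Γ : Set Form) (A : Form) : Prop :=
  (∀ C ∈ Γ, Valid B C) → Valid B A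

/-- Categorical validity in Sandqvist's variant: disjunction is explained
in elimination style, quantifying over atomic conclusions. -/
def SValid (B : Set Rule) : Form → Prop
  | .atom a => Derives B a
  | .bot => False
  | .and A C => SValid B A ∧ SValid B C
  | .or A C => ∀ c : Nat,
      (SValid B A → Derives B c) → (SValid B C → Derives B c) → Derives B c
  | .imp A C => SValid B A → SValid B C

/-- Hypothetical consequence on a base, Sandqvist's variant: `Γ ⊨ˢ_B A`. -/
def SCons (B : Set Rule) (Γ : Set Form) (A : Form) : Prop :=
  (∀ C ∈ Γ, SValid B C) → SValid B A

/-- Intuitionistic propositional natural deduction. -/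
inductive IL : Set Form → Form → Prop where
  | ax {Γ : Set Form} {A : Form} : A ∈ Γ → IL Γ A
  | andI {Γ A B} : IL Γ A → IL Γ B → IL Γ (Form.and A B)
  | andE1 {Γ A B} : IL Γ (Form.and A B) → IL Γ A
  | andE2 {Γ A B} : IL Γ (Form.and A B) → IL Γ B
  | orI1 {Γ A B} : IL Γ A → IL Γ (Form.or A B)
  | orI2 {Γ A B} : IL Γ B → IL Γ (Form.or A B)
  | orE {Γ A B C} : IL Γ (Form.or A B) → IL (insert A Γ) C →
      IL (insert B Γ) C → IL Γ C
  | impI {Γ A B} : IL (insert A Γ) B → IL Γ (Form.imp A B)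
  | impE {Γ A B} : IL Γ (Form.imp A B) → IL Γ A → IL Γ B
  | botE {Γ A} : IL Γ Form.bot → IL Γ A

/-- Intuitionistic natural deduction augmented with an atomic base:
`ILB B Γ A` is `Γ ⊢_{IL ∪ B} A`. -/
inductive ILB : Set Rule → Set Form → Form → Prop where
  | ax {B : Set Rule} {Γ : Set Form} {A : Form} : A ∈ Γ → ILB B Γ A
  | andI {B Γ A C} : ILB B Γ A → ILB B Γ C → ILB B Γ (Form.and A C)
  | andE1 {B Γ A C} : ILB B Γ (Form.and A C) → ILB B Γ A
  | andE2 {B Γ A C} : ILB B Γ (Form.and A C) → ILB B Γ C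
  | orI1 {B Γ A C} : ILB B Γ A → ILB B Γ (Form.or A C)
  | orI2 {B Γ A C} : ILB B Γ C → ILB B Γ (Form.or A C)
  | orE {B Γ A C D} : ILB B Γ (Form.or A C) → ILB B (insert A Γ) D →
      ILB B (insert C Γ) D → ILB B Γ D
  | impI {B Γ A C} : ILB B (insert A Γ) C → ILB B Γ (Form.imp A C)
  | impE {B Γ A C} : ILB B Γ (Form.imp A C) → ILB B Γ A → ILB B Γ C
  | botE {B Γ A} : ILB B Γ Form.bot → ILB B Γ A
  | base {B : Set Rule} {Γ : Set Form} {prems : List (List Rule × Nat)} {a : Nat} :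
      Rule.mk prems a ∈ B →
      (∀ p ∈ prems, ILB (B ∪ {r | r ∈ p.1}) Γ (Form.atom p.2)) →
      ILB B Γ (Form.atom a)

def evalF (v : Nat → Prop) : Form → Prop
  | .atom a => v a
  | .bot => False
  | .and A B => evalF v A ∧ evalF v B
  | .or A B => evalF v A ∨ evalF v B
  | .imp A B => evalF v A → evalF v B

lemma ilb_sound (v : Nat → Prop) {B Γ A} (h : ILB B Γ A) (hB : B = ∅)
    (hΓ : ∀ C ∈ Γ, evalF v C) : evalF v A := by
  induction h with
  | ax hmem => exact hΓ _ hmem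
  | andI _ _ ih1 ih2 => exact ⟨ih1 hB hΓ, ih2 hB hΓ⟩
  | andE1 _ ih => exact (ih hB hΓ).1
  | andE2 _ ih => exact (ih hB hΓ).2
  | orI1 _ ih => exact Or.inl (ih hB hΓ)
  | orI2 _ ih => exact Or.inr (ih hB hΓ)
  | orE _ _ _ ih ih1 ih2 =>
      rcases ih hB hΓ with h1 | h2
      · exact ih1 hB (by rintro C (rfl | hC); exacts [h1, hΓ _ hC])
      · exact ih2 hB (by rintro C (rfl | hC); exacts [h2, hΓ _ hC])
  | impI _ ih =>
      intro hA
      exact ih hB (by rintro C (rfl | hC); exacts [hA, hΓ _ hC])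
  | impE _ _ ih1 ih2 => exact ih1 hB hΓ (ih2 hB hΓ)
  | botE _ ih => exact (ih hB hΓ).elim
  | base hmem _ _ => subst hB; exact hmem.elim

lemma no_derives_empty (a : Nat) : ¬ Derives ∅ a := by
  rintro ⟨hmem, -⟩; exact hmem

/-- Intuitionistic propositional logic is not base-complete over
non-monotonic standard base semantics: with `Γ = {p}`, `A = q`, `𝔅 = ∅`,
`Γ ⊨_𝔅 A` holds but `Γ ⊬_{IL ∪ 𝔅} A`. -/
theorem stmt4 (p q : Nat) (hpq : p ≠ q) :
    ∃ (Γ : Set Form) (A : Form) (𝔅 : Set Rule),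
      Γ = {Form.atom p} ∧ A = Form.atom q ∧ 𝔅 = ∅ ∧
      Cons 𝔅 Γ A ∧ ¬ ILB 𝔅 Γ A := by
  refine ⟨{Form.atom p}, Form.atom q, ∅, rfl, rfl, rfl, ?_, ?_⟩
  · intro h
    exact absurd (h (Form.atom p) rfl) (no_derives_empty p)
  · intro h
    have := ilb_sound (fun a => a = p) h rfl (by rintro C rfl; rfl)
    exact hpq this.symm
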